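/- Let β₁, β₂ > 1 be two different non-integers with ν_{β₁} = ν_{β₂}. Then the orbits O_{β₁} = {T_{β₁}^n(1) : n ≥ 1} and O_{β₂} = {T_{β₂}^n(1) : n ≥ 1} are both finite sets, and O_{β₁} \ {0} = O_{β₂} \ {0}. -/

import Mathlib

open MeasureTheory Filter Set

/-- The orbit of `1` under the β-transformation: `betaOrb β 0 = 1`,
`betaOrb β (n+1) = β * betaOrb β n (mod 1)`. -/
noncomputable def betaOrb (β : ℝ) : ℕ → ℝ
  | 0 => 1
  | n + 1 => Int.fract (β * betaOrb β n)

/-- The unnormalized density `h_β(x) = Σ_{n ≥ 0, T_β^n(1) > x} β^{-n}`. -/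
noncomputable def hBeta (β : ℝ) (x : ℝ) : ℝ :=
  ∑' n : ℕ, if x < betaOrb β n then (β ^ n)⁻¹ else 0

/-- The normalization constant `K_β = Σ_{n ≥ 0} T_β^n(1) / β^n`. -/
noncomputable def KBeta (β : ℝ) : ℝ :=
  ∑' n : ℕ, betaOrb β n / β ^ n

/-- The Rényi–Parry measure: density `h_β / K_β` w.r.t. Lebesgue measure on `[0,1)`. -/
noncomputable def nuBeta (β : ℝ) : Measure ℝ :=
  (volume.restrict (Set.Ico (0 : ℝ) 1)).withDensity
    (fun x => ENNReal.ofReal (hBeta β x / KBeta β))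

/-!
The density `h_β / K_β` of `ν_β` is right-continuous, and at a point `y` its jump from the left
is `K_β⁻¹ ∑_{T_β^n(1) = y} β^{-n}`. A right-continuous density is determined everywhere by the
measure, so `ν_{β₁} = ν_{β₂}` forces equal jumps, hence the same orbit points in `(0, 1)`.
If the orbit of `1` were infinite it would be injective, the jump at `T_β^n(1)` would be exactly
`β^{-n} / K_β`, and the two strictly increasing sequences `K_{βᵢ} βᵢ^{n+1}` would have the same
range, forcing `β₁ = β₂`.
-/

open Topology Function

lemma Function.finite_range_iterate_of_not_injective {α : Type*} {f : α → α} {x : α}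
    (h : ¬Injective fun n => f^[n] x) : (range fun n => f^[n] x).Finite := by
  obtain ⟨a, b, hab, hne⟩ : ∃ a b, f^[a] x = f^[b] x ∧ a ≠ b := by
    simpa [Injective, and_comm] using h
  wlog hlt : a < b generalizing a b
  · exact this b a hab.symm hne.symm (by omega)
  have hper : IsPeriodicPt f (b - a) (f^[a] x) := by
    rw [IsPeriodicPt, IsFixedPt, ← iterate_add_apply, Nat.sub_add_cancel hlt.le, hab]
  refine ((finite_Iio b).image fun n => f^[n] x).subset ?_
  rintro _ ⟨n, rfl⟩
  rcases lt_or_ge n a with hn | hn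
  · exact ⟨n, by simp only [mem_Iio]; omega, rfl⟩
  · refine ⟨(n - a) % (b - a) + a, ?_, ?_⟩
    · have := Nat.mod_lt (n - a) (by omega : 0 < b - a)
      simp only [mem_Iio]
      omega
    · show f^[(n - a) % (b - a) + a] x = f^[n] x
      rw [iterate_add_apply, hper.iterate_mod_apply, ← iterate_add_apply, Nat.sub_add_cancel hn]

lemma eq_of_range_mul_pow_eq {c₁ c₂ r₁ r₂ : ℝ} (hc₁ : 0 < c₁) (hc₂ : 0 < c₂)
    (hr₁ : 1 < r₁) (hr₂ : 1 < r₂)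
    (h : range (fun n : ℕ => c₁ * r₁ ^ n) = range fun n : ℕ => c₂ * r₂ ^ n) : r₁ = r₂ := by
  have heq := (((pow_right_strictMono₀ hr₁).const_mul hc₁).range_inj
    ((pow_right_strictMono₀ hr₂).const_mul hc₂)).1 h
  have h0 := congrFun heq 0
  have h1 := congrFun heq 1
  simp only [pow_zero, mul_one, pow_one] at h0 h1
  rw [h0] at h1
  exact mul_left_cancel₀ hc₂.ne' h1

section StepSum

variable {a w : ℕ → ℝ}

lemma summable_ite_of_summable (hw : Summable w) (p : ℕ → Prop) [DecidablePred p] :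
    Summable fun n => if p n then w n else 0 :=
  .of_norm_bounded hw.abs fun n => by split <;> simp

lemma antitone_tsum_ite_lt (hw : Summable w) (hw0 : ∀ n, 0 ≤ w n) :
    Antitone fun t => ∑' n, if t < a n then w n else 0 := fun s t hst =>
  (summable_ite_of_summable hw _).tsum_le_tsum (fun n => by
    by_cases h : t < a n
    · simp [h, hst.trans_lt h]
    · simp only [h, if_false]; split <;> simp [hw0]) (summable_ite_of_summable hw _)

lemma tendsto_tsum_ite_lt (hw : Summable w) {l : Filter ℝ} {p : ℕ → Prop} [DecidablePred p]
    (h : ∀ n, ∀ᶠ t in l, (t < a n ↔ p n)) :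
    Tendsto (fun t => ∑' n, if t < a n then w n else 0) l
      (𝓝 (∑' n, if p n then w n else 0)) :=
  tendsto_tsum_of_dominated_convergence hw.abs
    (fun n => tendsto_const_nhds.congr' ((h n).mono fun t ht => by simp only [ht]))
    (.of_forall fun t n => by split <;> simp)

lemma tendsto_tsum_ite_lt_nhdsGT (hw : Summable w) (x : ℝ) :
    Tendsto (fun t => ∑' n, if t < a n then w n else 0) (𝓝[>] x)
      (𝓝 (∑' n, if x < a n then w n else 0)) := by
  refine tendsto_tsum_ite_lt hw fun n => ?_
  rcases lt_or_ge x (a n) with h | h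
  · filter_upwards [nhdsWithin_le_nhds (Iio_mem_nhds h)] with t ht using iff_of_true ht h
  · filter_upwards [self_mem_nhdsWithin] with t (ht : x < t)
    exact iff_of_false (by linarith) (by linarith)

lemma tendsto_tsum_ite_lt_nhdsLT (hw : Summable w) (y : ℝ) :
    Tendsto (fun t => ∑' n, if t < a n then w n else 0) (𝓝[<] y)
      (𝓝 (∑' n, if y ≤ a n then w n else 0)) := by
  refine tendsto_tsum_ite_lt hw fun n => ?_
  rcases le_or_gt y (a n) with h | h
  · filter_upwards [self_mem_nhdsWithin] with t (ht : t < y) using iff_of_true (ht.trans_le h) h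
  · filter_upwards [nhdsWithin_le_nhds (Ioi_mem_nhds h)] with t (ht : a n < t)
    exact iff_of_false (by linarith) (by linarith)

lemma tsum_ite_le_sub_tsum_ite_lt (hw : Summable w) (y : ℝ) :
    (∑' n, if y ≤ a n then w n else 0) - (∑' n, if y < a n then w n else 0) =
      ∑' n, if a n = y then w n else 0 := by
  rw [← (summable_ite_of_summable hw _).tsum_sub (summable_ite_of_summable hw _)]
  refine tsum_congr fun n => ?_
  rcases lt_trichotomy y (a n) with h | h | h
  · simp [h.le, h, h.ne']
  · simp [h]
  · simp [not_le.2 h, not_lt.2 h.le, h.ne]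

end StepSum

lemma frequently_nhdsGT_of_ae {p : ℝ → Prop} (h : ∀ᵐ t, p t) (x : ℝ) :
    ∃ᶠ t in 𝓝[>] x, p t := fun hnot => by
  obtain ⟨b, hxb : x < b, hb⟩ := mem_nhdsGT_iff_exists_Ioo_subset.1 hnot
  exact hxb.not_ge (by simpa using measure_mono_null hb (ae_iff.1 h))

lemma frequently_nhdsLT_of_ae {p : ℝ → Prop} (h : ∀ᵐ t, p t) (x : ℝ) :
    ∃ᶠ t in 𝓝[<] x, p t := fun hnot => by
  obtain ⟨b, hbx : b < x, hb⟩ := mem_nhdsLT_iff_exists_Ioo_subset.1 hnot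
  exact hbx.not_ge (by simpa using measure_mono_null hb (ae_iff.1 h))

def betaOrbit (β : ℝ) : Set ℝ := {x | ∃ n, 1 ≤ n ∧ betaOrb β n = x}

/-- The jump `h_β(y⁻) - h_β(y)` of the density at `y`. -/
noncomputable def betaJump (β y : ℝ) : ℝ := ∑' n : ℕ, if betaOrb β n = y then (β ^ n)⁻¹ else 0

section Beta

variable {β : ℝ}

lemma betaOrb_eq_iterate (β : ℝ) (n : ℕ) :
    betaOrb β n = (fun x => Int.fract (β * x))^[n] 1 := by
  induction n with
  | zero => rfl
  | succ n ih => rw [iterate_succ_apply', ← ih, betaOrb]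

lemma betaOrb_mem_Icc (β : ℝ) (n : ℕ) : betaOrb β n ∈ Icc 0 1 := by
  cases n with
  | zero => simp [betaOrb]
  | succ n => exact ⟨Int.fract_nonneg _, (Int.fract_lt_one _).le⟩

lemma betaOrb_mem_Ico {n : ℕ} (hn : 1 ≤ n) : betaOrb β n ∈ Ico 0 1 := by
  obtain ⟨k, rfl⟩ := Nat.exists_eq_add_of_le' hn
  exact ⟨Int.fract_nonneg _, Int.fract_lt_one _⟩

lemma betaOrbit_sdiff_zero_subset_Ioo (β : ℝ) : betaOrbit β \ {0} ⊆ Ioo 0 1 := by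
  rintro _ ⟨⟨n, hn, rfl⟩, h0 : betaOrb β n ≠ 0⟩
  exact ⟨(betaOrb_mem_Ico hn).1.lt_of_ne' h0, (betaOrb_mem_Ico hn).2⟩

lemma betaOrbit_eq_range (β : ℝ) : betaOrbit β = range fun n => betaOrb β (n + 1) := by
  ext x
  constructor
  · rintro ⟨n, hn, rfl⟩
    obtain ⟨k, rfl⟩ := Nat.exists_eq_add_of_le' hn
    exact ⟨k, rfl⟩
  · rintro ⟨k, rfl⟩
    exact ⟨k + 1, by omega, rfl⟩

lemma injective_betaOrb_of_infinite (h : (betaOrbit β).Infinite) : Injective (betaOrb β) := by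
  by_contra hinj
  refine h ?_
  have hrange := finite_range_iterate_of_not_injective
    (f := fun x => Int.fract (β * x)) (x := 1) (by simpa only [← betaOrb_eq_iterate] using hinj)
  refine hrange.subset ?_
  rintro _ ⟨n, -, rfl⟩
  exact ⟨n, (betaOrb_eq_iterate β n).symm⟩

lemma betaOrb_ne_zero_of_injective (h : Injective (betaOrb β)) (n : ℕ) : betaOrb β n ≠ 0 :=
  fun h0 => n.succ_ne_self (h (by simp [betaOrb, h0]))

lemma zero_notMem_betaOrbit_of_injective (h : Injective (betaOrb β)) : 0 ∉ betaOrbit β :=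
  fun ⟨n, _, hn⟩ => betaOrb_ne_zero_of_injective h n hn

lemma betaJump_betaOrb_of_injective (h : Injective (betaOrb β)) (n : ℕ) :
    betaJump β (betaOrb β n) = (β ^ n)⁻¹ := by
  rw [betaJump, tsum_eq_single n fun m hm => if_neg fun hmn => hm (h hmn), if_pos rfl]

lemma range_KBeta_mul_pow_eq_image (h : Injective (betaOrb β)) :
    range (fun n : ℕ => KBeta β * β * β ^ n) =
      (fun y => KBeta β / betaJump β y) '' betaOrbit β := by
  rw [betaOrbit_eq_range, ← range_comp]
  refine congrArg range (funext fun n => ?_)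
  rw [comp_apply, betaJump_betaOrb_of_injective h, div_inv_eq_mul, pow_succ', mul_assoc]

variable (hβ : 1 < β)
include hβ

lemma summable_inv_pow : Summable fun n : ℕ => (β ^ n)⁻¹ := by
  simpa only [inv_pow] using
    summable_geometric_of_lt_one (inv_nonneg.2 (by linarith)) (inv_lt_one_of_one_lt₀ hβ)

lemma KBeta_pos : 0 < KBeta β := by
  have hterm : ∀ n, betaOrb β n / β ^ n ∈ Icc 0 (β ^ n)⁻¹ := fun n => by
    have hβn : 0 < β ^ n := by positivity
    rw [div_eq_mul_inv]
    exact ⟨mul_nonneg (betaOrb_mem_Icc β n).1 (inv_nonneg.2 hβn.le),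
      mul_le_of_le_one_left (inv_nonneg.2 hβn.le) (betaOrb_mem_Icc β n).2⟩
  exact ((summable_inv_pow hβ).of_nonneg_of_le (fun n => (hterm n).1) fun n => (hterm n).2).tsum_pos
    (fun n => (hterm n).1) 0 (by simp [betaOrb])

lemma hBeta_nonneg (x : ℝ) : 0 ≤ hBeta β x :=
  tsum_nonneg fun n => by split <;> positivity

lemma mem_betaOrbit_iff_betaJump_pos {y : ℝ} (hy : y ≠ 1) :
    y ∈ betaOrbit β ↔ 0 < betaJump β y := by
  constructor
  · rintro ⟨n, -, rfl⟩
    exact (summable_ite_of_summable (summable_inv_pow hβ) _).tsum_pos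
      (fun m => by split <;> positivity) n (by simp only [if_true]; positivity)
  · intro hpos
    by_contra hy'
    have hzero : ∀ n, betaOrb β n ≠ y := by
      rintro (_ | n) hn
      · exact hy hn.symm
      · exact hy' ⟨n + 1, by omega, hn⟩
    simp [betaJump, hzero] at hpos

lemma tendsto_hBeta_nhdsGT (x : ℝ) : Tendsto (hBeta β) (𝓝[>] x) (𝓝 (hBeta β x)) :=
  tendsto_tsum_ite_lt_nhdsGT (summable_inv_pow hβ) x

lemma tendsto_hBeta_nhdsLT (y : ℝ) :
    Tendsto (hBeta β) (𝓝[<] y) (𝓝 (∑' n : ℕ, if y ≤ betaOrb β n then (β ^ n)⁻¹ else 0)) :=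
  tendsto_tsum_ite_lt_nhdsLT (summable_inv_pow hβ) y

lemma measurable_hBeta : Measurable (hBeta β) :=
  (antitone_tsum_ite_lt (summable_inv_pow hβ) fun n => by positivity).measurable

end Beta

section NuBetaEq

variable {β₁ β₂ : ℝ} (hβ₁ : 1 < β₁) (hβ₂ : 1 < β₂) (hν : nuBeta β₁ = nuBeta β₂)
include hβ₁ hβ₂ hν

lemma ae_hBeta_div_KBeta_eq_of_nuBeta_eq :
    ∀ᵐ t, t ∈ Ico (0 : ℝ) 1 → hBeta β₁ t / KBeta β₁ = hBeta β₂ t / KBeta β₂ := by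
  have hdens (β : ℝ) (hβ : 1 < β) : Measurable fun t => ENNReal.ofReal (hBeta β t / KBeta β) :=
    ((measurable_hBeta hβ).div_const _).ennreal_ofReal
  have hae := (withDensity_eq_iff_of_sigmaFinite (hdens β₁ hβ₁).aemeasurable
    (hdens β₂ hβ₂).aemeasurable).1 hν
  filter_upwards [(ae_restrict_iff' measurableSet_Ico).1 hae] with t ht hmem
  exact (ENNReal.ofReal_eq_ofReal_iff
    (div_nonneg (hBeta_nonneg hβ₁ t) (KBeta_pos hβ₁).le)
    (div_nonneg (hBeta_nonneg hβ₂ t) (KBeta_pos hβ₂).le)).1 (ht hmem)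

lemma betaJump_div_KBeta_eq_of_nuBeta_eq {y : ℝ} (hy : y ∈ Ioo (0 : ℝ) 1) :
    betaJump β₁ y / KBeta β₁ = betaJump β₂ y / KBeta β₂ := by
  have hae := ae_hBeta_div_KBeta_eq_of_nuBeta_eq hβ₁ hβ₂ hν
  have hright : hBeta β₁ y / KBeta β₁ = hBeta β₂ y / KBeta β₂ :=
    tendsto_nhds_unique_of_frequently_eq ((tendsto_hBeta_nhdsGT hβ₁ y).div_const _)
      ((tendsto_hBeta_nhdsGT hβ₂ y).div_const _)
      (((frequently_nhdsGT_of_ae hae y).and_eventually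
        (Ico_mem_nhdsGT_of_mem ⟨hy.1.le, hy.2⟩)).mono fun t ht => ht.1 ht.2)
  have hleft := tendsto_nhds_unique_of_frequently_eq ((tendsto_hBeta_nhdsLT hβ₁ y).div_const _)
      ((tendsto_hBeta_nhdsLT hβ₂ y).div_const _)
      (((frequently_nhdsLT_of_ae hae y).and_eventually
        (Ico_mem_nhdsLT_of_mem ⟨hy.1, hy.2.le⟩)).mono fun t ht => ht.1 ht.2)
  rw [betaJump, betaJump, ← tsum_ite_le_sub_tsum_ite_lt (summable_inv_pow hβ₁),
    ← tsum_ite_le_sub_tsum_ite_lt (summable_inv_pow hβ₂), sub_div, sub_div, hleft]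
  exact congrArg _ hright

lemma betaOrbit_sdiff_zero_subset_of_nuBeta_eq : betaOrbit β₁ \ {0} ⊆ betaOrbit β₂ := by
  intro y hy
  have hyIoo := betaOrbit_sdiff_zero_subset_Ioo β₁ hy
  rw [mem_betaOrbit_iff_betaJump_pos hβ₂ hyIoo.2.ne]
  have hpos := (mem_betaOrbit_iff_betaJump_pos hβ₁ hyIoo.2.ne).1 hy.1
  have hquot : 0 < betaJump β₂ y / KBeta β₂ :=
    betaJump_div_KBeta_eq_of_nuBeta_eq hβ₁ hβ₂ hν hyIoo ▸ div_pos hpos (KBeta_pos hβ₁)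
  exact (div_pos_iff_of_pos_right (KBeta_pos hβ₂)).1 hquot

lemma betaOrbit_sdiff_zero_eq_of_nuBeta_eq : betaOrbit β₁ \ {0} = betaOrbit β₂ \ {0} :=
  subset_antisymm (fun _ hy => ⟨betaOrbit_sdiff_zero_subset_of_nuBeta_eq hβ₁ hβ₂ hν hy, hy.2⟩)
    fun _ hy => ⟨betaOrbit_sdiff_zero_subset_of_nuBeta_eq hβ₂ hβ₁ hν.symm hy, hy.2⟩

lemma eq_of_nuBeta_eq_of_injective (h₁ : Injective (betaOrb β₁)) (h₂ : Injective (betaOrb β₂)) :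
    β₁ = β₂ := by
  have hzero₁ := zero_notMem_betaOrbit_of_injective h₁
  have horbit : betaOrbit β₁ = betaOrbit β₂ := by
    rw [← sdiff_singleton_eq_self hzero₁,
      ← sdiff_singleton_eq_self (zero_notMem_betaOrbit_of_injective h₂)]
    exact betaOrbit_sdiff_zero_eq_of_nuBeta_eq hβ₁ hβ₂ hν
  refine eq_of_range_mul_pow_eq (mul_pos (KBeta_pos hβ₁) (zero_lt_one.trans hβ₁))
    (mul_pos (KBeta_pos hβ₂) (zero_lt_one.trans hβ₂)) hβ₁ hβ₂ ?_
  rw [range_KBeta_mul_pow_eq_image h₁, range_KBeta_mul_pow_eq_image h₂, ← horbit]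
  refine image_congr fun y hy => ?_
  have hyIoo := betaOrbit_sdiff_zero_subset_Ioo β₁ ⟨hy, fun h0 => hzero₁ (h0 ▸ hy)⟩
  simpa only [inv_div] using congrArg Inv.inv (betaJump_div_KBeta_eq_of_nuBeta_eq hβ₁ hβ₂ hν hyIoo)

lemma betaOrbit_finite_of_nuBeta_eq (hne : β₁ ≠ β₂) : (betaOrbit β₁).Finite := by
  rw [← not_infinite]
  intro hinf₁
  have hinf₂ : (betaOrbit β₂).Infinite := by
    have := hinf₁.sdiff (finite_singleton 0)
    rw [betaOrbit_sdiff_zero_eq_of_nuBeta_eq hβ₁ hβ₂ hν] at this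
    exact this.mono sdiff_subset
  exact hne (eq_of_nuBeta_eq_of_injective hβ₁ hβ₂ hν (injective_betaOrb_of_infinite hinf₁)
    (injective_betaOrb_of_infinite hinf₂))

end NuBetaEq

theorem stmt_11_general (β₁ β₂ : ℝ) (hβ₁ : 1 < β₁) (hβ₂ : 1 < β₂) (hne : β₁ ≠ β₂)
    (hν : nuBeta β₁ = nuBeta β₂) :
    {x : ℝ | ∃ n : ℕ, 1 ≤ n ∧ betaOrb β₁ n = x}.Finite ∧
    {x : ℝ | ∃ n : ℕ, 1 ≤ n ∧ betaOrb β₂ n = x}.Finite ∧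
    {x : ℝ | ∃ n : ℕ, 1 ≤ n ∧ betaOrb β₁ n = x} \ {0} =
      {x : ℝ | ∃ n : ℕ, 1 ≤ n ∧ betaOrb β₂ n = x} \ {0} :=
  ⟨betaOrbit_finite_of_nuBeta_eq hβ₁ hβ₂ hν hne,
    betaOrbit_finite_of_nuBeta_eq hβ₂ hβ₁ hν.symm hne.symm,
    betaOrbit_sdiff_zero_eq_of_nuBeta_eq hβ₁ hβ₂ hν⟩

theorem stmt_11 (β₁ β₂ : ℝ) (hβ₁ : 1 < β₁) (hβ₂ : 1 < β₂) (hne : β₁ ≠ β₂)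
    (hni₁ : ¬ ∃ k : ℤ, β₁ = k) (hni₂ : ¬ ∃ k : ℤ, β₂ = k)
    (hν : nuBeta β₁ = nuBeta β₂) :
    {x : ℝ | ∃ n : ℕ, 1 ≤ n ∧ betaOrb β₁ n = x}.Finite ∧
    {x : ℝ | ∃ n : ℕ, 1 ≤ n ∧ betaOrb β₂ n = x}.Finite ∧
    {x : ℝ | ∃ n : ℕ, 1 ≤ n ∧ betaOrb β₁ n = x} \ {0} =
      {x : ℝ | ∃ n : ℕ, 1 ≤ n ∧ betaOrb β₂ n = x} \ {0} :=
  stmt_11_general β₁ β₂ hβ₁ hβ₂ hne hν
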